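/- arXiv:1008.0521 — 5 statements merged into one kernel-verified Lean document; each statement's English description precedes it below -/
import Mathlib

section
/- For every non-negative integer k there exists a Boolean function f on n = (2k+1)^2 variables with sensitivity s(f) = 2k+1 and block sensitivity bs(f) = (2k+1)(k+1). -/
def flipS {n : ℕ} (w : Fin n → Bool) (S : Finset (Fin n)) : Fin n → Bool :=
  fun i => if i ∈ S then !(w i) else w i

def sensAt {n : ℕ} (f : (Fin n → Bool) → Bool) (w : Fin n → Bool) : ℕ :=
  (Finset.univ.filter (fun i => f (flipS w {i}) ≠ f w)).card

def sens {n : ℕ} (f : (Fin n → Bool) → Bool) : ℕ :=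
  Finset.univ.sup (fun w => sensAt f w)

noncomputable def bsAt {n : ℕ} (f : (Fin n → Bool) → Bool) (w : Fin n → Bool) : ℕ :=
  sSup {k | ∃ B : Fin k → Finset (Fin n), (∀ j, (B j).Nonempty) ∧
    (∀ j₁ j₂, j₁ ≠ j₂ → Disjoint (B j₁) (B j₂)) ∧ (∀ j, f (flipS w (B j)) ≠ f w)}

noncomputable def bs {n : ℕ} (f : (Fin n → Bool) → Bool) : ℕ :=
  Finset.univ.sup (fun w => bsAt f w)

/-!
Split the `(2k+1)^2` variables into `2k+1` blocks of `2k+1` bits and let `f` be the OR, over the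
blocks, of "the block is one of the `k+1` patterns `1_{2t,2t+1}`" (the last one is `1_{2k}`).
At a `1`-input every sensitive set must meet a block showing a pattern, so there are at most `2k+1`
disjoint ones. At a `0`-input each sensitive set completes some pattern in some block, and no two
disjoint ones complete the same (block, pattern) pair: at most `(2k+1)(k+1)`. Since distinct
patterns are at Hamming distance `≥ 3`, a block of a `0`-input has at most one sensitive bit.
At the zero input the supports of all patterns in all blocks are disjoint sensitive sets, and the
singleton pattern `1_{2k}` gives one sensitive bit per block.
-/

open Finset Function

section Counting

lemma card_le_card_of_pairwise_disjoint {α β κ : Type*} [Fintype β] [Fintype κ]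
    {B : κ → Finset α} (hB : Pairwise (Disjoint on B)) (g : β → α) (hg : ∀ i, ∃ y, g y ∈ B i) :
    Fintype.card κ ≤ Fintype.card β := by
  choose c hc using hg
  refine Fintype.card_le_of_injective c fun i i' hii' => ?_
  by_contra hne
  exact disjoint_left.mp (hB hne) (hc i) (hii' ▸ hc i')

variable {n : ℕ} {f : (Fin n → Bool) → Bool} {w : Fin n → Bool}

lemma bsAt_le_of_forall {N : ℕ}
    (h : ∀ k (B : Fin k → Finset (Fin n)), (∀ j, (B j).Nonempty) → Pairwise (Disjoint on B) →
      (∀ j, f (flipS w (B j)) ≠ f w) → k ≤ N) :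
    bsAt f w ≤ N :=
  csSup_le ⟨0, Fin.elim0, fun j => j.elim0, fun j => j.elim0, fun j => j.elim0⟩
    fun k ⟨B, hne, hd, hs⟩ => h k B hne (fun _ _ => hd _ _) hs

lemma card_le_bsAt {κ : Type*} [Fintype κ] (B : κ → Finset (Fin n))
    (hne : ∀ i, (B i).Nonempty) (hd : Pairwise (Disjoint on B))
    (hs : ∀ i, f (flipS w (B i)) ≠ f w) :
    Fintype.card κ ≤ bsAt f w := by
  refine le_csSup ⟨n, fun k ⟨B', hne', hd', _⟩ => ?_⟩ ⟨B ∘ (Fintype.equivFin κ).symm, ?_, ?_, ?_⟩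
  · simpa using card_le_card_of_pairwise_disjoint (fun _ _ h => hd' _ _ h) id hne'
  · exact fun j => hne _
  · exact fun j₁ j₂ h => hd ((Fintype.equivFin κ).symm.injective.ne h)
  · exact fun j => hs _

end Counting

section Hamming

variable {b : ℕ}

lemma hammingDist_flipS_singleton_le (x : Fin b → Bool) (p : Fin b) :
    hammingDist (flipS x {p}) x ≤ 1 := by
  refine (card_le_card fun q hq => ?_).trans (card_singleton p).le
  rw [mem_filter] at hq
  by_contra hqp
  simp_all [flipS]

lemma hammingDist_flipS_of_disjoint (x : Fin b → Bool) {S T : Finset (Fin b)}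
    (hST : Disjoint S T) : hammingDist (flipS x S) (flipS x T) = #S + #T := by
  rw [hammingDist, ← card_union_of_disjoint hST]
  congr 1
  ext q
  rw [mem_filter, mem_union]
  by_cases hS : q ∈ S <;> by_cases hT : q ∈ T <;> simp_all [flipS, disjoint_left]

lemma eq_of_flipS_singleton_eq {ι : Type*} {pat : ι → Fin b → Bool}
    (hpat : Pairwise fun t s => 3 ≤ hammingDist (pat t) (pat s)) {x : Fin b → Bool}
    {p q : Fin b} {t s : ι} (hp : flipS x {p} = pat t) (hq : flipS x {q} = pat s) : p = q := by
  by_contra hpq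
  have hts : t ≠ s := by
    rintro rfl
    have := congrFun (hp.trans hq.symm) p
    simp [flipS, hpq] at this
  have := (hammingDist_triangle (pat t) x (pat s)).trans (add_le_add
    (hp ▸ hammingDist_flipS_singleton_le x p)
    ((hammingDist_comm x _).trans_le (hq ▸ hammingDist_flipS_singleton_le x q)))
  exact absurd (hpat hts) (by omega)

end Hamming

section PatternOr

variable {a b n : ℕ} (e : Fin a × Fin b ≃ Fin n)

def blockEmb (j : Fin a) : Fin b ↪ Fin n :=
  ⟨fun p => e (j, p), fun _ _ h => (Prod.mk.inj (e.injective h)).2⟩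

def restrictBlock (w : Fin n → Bool) (j : Fin a) : Fin b → Bool :=
  w ∘ blockEmb e j

def patternOr {ι : Type*} [Fintype ι] (pat : ι → Fin b → Bool) (w : Fin n → Bool) : Bool :=
  decide (∃ j t, restrictBlock e w j = pat t)

variable {e}

lemma blockEmb_apply (j : Fin a) (p : Fin b) : blockEmb e j p = e (j, p) := rfl

lemma restrictBlock_flipS_map (w : Fin n → Bool) (j : Fin a) (S : Finset (Fin b)) :
    restrictBlock e (flipS w (S.map (blockEmb e j))) j = flipS (restrictBlock e w j) S := by
  funext p
  simp [restrictBlock, flipS]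

lemma restrictBlock_flipS_of_forall_notMem {w : Fin n → Bool} {B : Finset (Fin n)} {j : Fin a}
    (h : ∀ p, e (j, p) ∉ B) : restrictBlock e (flipS w B) j = restrictBlock e w j := by
  funext p
  simp [restrictBlock, flipS, blockEmb_apply, h p]

variable {ι : Type*} [Fintype ι] {pat : ι → Fin b → Bool} {w : Fin n → Bool}

lemma patternOr_eq_true_iff : patternOr e pat w = true ↔ ∃ j t, restrictBlock e w j = pat t :=
  decide_eq_true_iff

lemma exists_mem_of_patternOr_flipS_ne {B : Finset (Fin n)} {j : Fin a} {t : ι}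
    (hj : restrictBlock e w j = pat t) (hB : patternOr e pat (flipS w B) ≠ patternOr e pat w) :
    ∃ p, e (j, p) ∈ B := by
  by_contra! h
  have hw : patternOr e pat w = true := patternOr_eq_true_iff.mpr ⟨j, t, hj⟩
  refine hB (hw ▸ patternOr_eq_true_iff.mpr ⟨j, t, ?_⟩)
  rwa [restrictBlock_flipS_of_forall_notMem h]

lemma exists_mem_of_restrictBlock_flipS_eq (hw : patternOr e pat w = false)
    {B : Finset (Fin n)} {j : Fin a} {t : ι} (h : restrictBlock e (flipS w B) j = pat t) :
    ∃ p, e (j, p) ∈ B := by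
  by_contra! hB
  rw [restrictBlock_flipS_of_forall_notMem hB] at h
  simp [patternOr_eq_true_iff.mpr ⟨j, t, h⟩] at hw

lemma sensAt_patternOr_le_of_eq_true (hw : patternOr e pat w = true) :
    sensAt (patternOr e pat) w ≤ b := by
  obtain ⟨j, t, hj⟩ := patternOr_eq_true_iff.mp hw
  calc sensAt (patternOr e pat) w ≤ #(univ.map (blockEmb e j)) := by
        refine card_le_card fun i hi => ?_
        obtain ⟨p, hp⟩ := exists_mem_of_patternOr_flipS_ne hj (mem_filter.mp hi).2
        exact mem_map.mpr ⟨p, mem_univ _, mem_singleton.mp hp⟩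
    _ = b := by simp

lemma sensAt_patternOr_le_of_eq_false (hpat : Pairwise fun t s => 3 ≤ hammingDist (pat t) (pat s))
    (hw : patternOr e pat w = false) : sensAt (patternOr e pat) w ≤ a := by
  have hblock : ∀ j p, patternOr e pat (flipS w {e (j, p)}) ≠ patternOr e pat w →
      ∃ t, flipS (restrictBlock e w j) {p} = pat t := by
    intro j p h
    obtain ⟨j', t, ht⟩ := patternOr_eq_true_iff.mp (by simpa [hw] using h)
    obtain ⟨q, hq⟩ := exists_mem_of_restrictBlock_flipS_eq hw ht
    obtain rfl : j' = j := (Prod.mk.inj (e.injective (mem_singleton.mp hq))).1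
    rw [← blockEmb_apply, ← map_singleton, restrictBlock_flipS_map] at ht
    exact ⟨t, ht⟩
  refine (card_le_card_of_injOn (fun i => (e.symm i).1) (fun _ _ => mem_univ _) ?_).trans (by simp)
  intro i hi i' hi' hii'
  obtain ⟨⟨j, p⟩, rfl⟩ := e.surjective i
  obtain ⟨⟨j', p'⟩, rfl⟩ := e.surjective i'
  simp only [Equiv.symm_apply_apply] at hii'
  subst hii'
  obtain ⟨t, ht⟩ := hblock j p (mem_filter.mp (mem_coe.mp hi)).2
  obtain ⟨s, hs⟩ := hblock j p' (mem_filter.mp (mem_coe.mp hi')).2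
  rw [eq_of_flipS_singleton_eq hpat ht hs]

lemma sens_patternOr_le (hpat : Pairwise fun t s => 3 ≤ hammingDist (pat t) (pat s)) :
    sens (patternOr e pat) ≤ max a b :=
  Finset.sup_le fun w _ => by
    cases hw : patternOr e pat w
    · exact (sensAt_patternOr_le_of_eq_false hpat hw).trans (le_max_left _ _)
    · exact (sensAt_patternOr_le_of_eq_true hw).trans (le_max_right _ _)

lemma card_le_of_patternOr_eq_true {κ : Type*} [Fintype κ] {B : κ → Finset (Fin n)}
    (hB : Pairwise (Disjoint on B)) (hw : patternOr e pat w = true)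
    (hs : ∀ i, patternOr e pat (flipS w (B i)) ≠ patternOr e pat w) :
    Fintype.card κ ≤ b := by
  obtain ⟨j, t, hj⟩ := patternOr_eq_true_iff.mp hw
  simpa using card_le_card_of_pairwise_disjoint hB (blockEmb e j)
    fun i => exists_mem_of_patternOr_flipS_ne hj (hs i)

lemma card_le_of_patternOr_eq_false {κ : Type*} [Fintype κ] {B : κ → Finset (Fin n)}
    (hB : Pairwise (Disjoint on B)) (hw : patternOr e pat w = false)
    (hs : ∀ i, patternOr e pat (flipS w (B i)) ≠ patternOr e pat w) :
    Fintype.card κ ≤ a * Fintype.card ι := by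
  have : ∀ i, ∃ jt : Fin a × ι, restrictBlock e (flipS w (B i)) jt.1 = pat jt.2 := fun i => by
    obtain ⟨j, t, h⟩ := patternOr_eq_true_iff.mp (by simpa [hw] using hs i)
    exact ⟨(j, t), h⟩
  choose φ hφ using this
  -- Two disjoint sets completing the same pattern in the same block both flip a bit of that
  -- block, which then differs between the two flipped words.
  refine (Fintype.card_le_of_injective φ fun i i' hii' => ?_).trans (by simp)
  by_contra hne
  obtain ⟨p, hp⟩ := exists_mem_of_restrictBlock_flipS_eq hw (hφ i)
  have hp' : e ((φ i).1, p) ∉ B i' := disjoint_left.mp (hB hne) hp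
  have hφ' : restrictBlock e (flipS w (B i')) (φ i).1 = pat (φ i).2 := by
    rw [hii']
    exact hφ i'
  have := congrFun ((hφ i).trans hφ'.symm) p
  simp [restrictBlock, blockEmb_apply, flipS, hp, hp'] at this

lemma bs_patternOr_le : bs (patternOr e pat) ≤ max b (a * Fintype.card ι) :=
  Finset.sup_le fun w _ => bsAt_le_of_forall fun k B _ hB hs => by
    rw [← Fintype.card_fin k]
    cases hw : patternOr e pat w
    · exact (card_le_of_patternOr_eq_false hB hw hs).trans (le_max_right _ _)
    · exact (card_le_of_patternOr_eq_true hB hw hs).trans (le_max_left _ _)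

variable {S : ι → Finset (Fin b)}

lemma patternOr_const_false (hS : ∀ t, (S t).Nonempty) :
    patternOr e (fun t => flipS (fun _ => false) (S t)) (fun _ => false) = false := by
  by_contra h
  obtain ⟨j, t, h⟩ := patternOr_eq_true_iff.mp (by simpa using h)
  obtain ⟨p, hp⟩ := hS t
  simpa [restrictBlock, flipS, hp] using congrFun h p

lemma patternOr_flipS_map_eq_true (j : Fin a) (t : ι) :
    patternOr e (fun t => flipS (fun _ => false) (S t))
      (flipS (fun _ => false) ((S t).map (blockEmb e j))) = true :=
  patternOr_eq_true_iff.mpr ⟨j, t, restrictBlock_flipS_map _ _ _⟩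

lemma card_mul_le_bsAt_patternOr (hS : Pairwise (Disjoint on S)) (hne : ∀ t, (S t).Nonempty) :
    a * Fintype.card ι ≤
      bsAt (patternOr e fun t => flipS (fun _ => false) (S t)) fun _ => false := by
  have hdisj : Pairwise (Disjoint on fun jt : Fin a × ι => (S jt.2).map (blockEmb e jt.1)) := by
    rintro ⟨j, t⟩ ⟨j', t'⟩ hjt
    refine disjoint_left.mpr fun i hi hi' => ?_
    obtain ⟨p, hp, rfl⟩ := mem_map.mp hi
    obtain ⟨p', hp', he⟩ := mem_map.mp hi'
    obtain ⟨rfl, rfl⟩ := Prod.mk.inj (e.injective he)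
    exact disjoint_left.mp (hS fun h => hjt (Prod.ext rfl h)) hp hp'
  simpa using card_le_bsAt _ (fun jt : Fin a × ι => (hne jt.2).map) hdisj fun jt => by
    rw [patternOr_flipS_map_eq_true, patternOr_const_false hne]
    simp

lemma le_sensAt_patternOr (hne : ∀ t, (S t).Nonempty) {t₀ : ι} {p₀ : Fin b} (h₀ : S t₀ = {p₀}) :
    a ≤ sensAt (patternOr e fun t => flipS (fun _ => false) (S t)) fun _ => false := by
  have hsens : ∀ j, patternOr e (fun t => flipS (fun _ => false) (S t))
      (flipS (fun _ => false) {e (j, p₀)}) ≠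
      patternOr e (fun t => flipS (fun _ => false) (S t)) (fun _ => false) := fun j => by
    rw [← blockEmb_apply, ← map_singleton, ← h₀, patternOr_flipS_map_eq_true,
      patternOr_const_false hne]
    simp
  unfold sensAt
  simpa using card_le_card_of_injOn (fun j => e (j, p₀)) (s := univ)
    (fun j _ => mem_filter.mpr ⟨mem_univ _, hsens j⟩)
    fun j _ j' _ h => (Prod.mk.inj (e.injective h)).1

end PatternOr

section PairSupport

/-- The blocks `{2t, 2t + 1}` of `Fin (2k + 1)`; the last one is truncated to `{2k}`. -/
def pairSupport (k : ℕ) (t : Fin (k + 1)) : Finset (Fin (2 * k + 1)) := {p | (p : ℕ) / 2 = t}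

variable {k : ℕ}

lemma mem_pairSupport {t : Fin (k + 1)} {p : Fin (2 * k + 1)} :
    p ∈ pairSupport k t ↔ (p : ℕ) / 2 = t := by
  simp [pairSupport]

lemma pairwise_disjoint_pairSupport : Pairwise (Disjoint on pairSupport k) := fun _ _ hts =>
  disjoint_left.mpr fun _ hp hs =>
    hts (Fin.ext ((mem_pairSupport.mp hp).symm.trans (mem_pairSupport.mp hs)))

lemma pairSupport_nonempty (t : Fin (k + 1)) : (pairSupport k t).Nonempty :=
  ⟨⟨2 * t, by omega⟩, mem_pairSupport.mpr (by simp)⟩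

lemma pairSupport_last : pairSupport k (Fin.last k) = {⟨2 * k, by omega⟩} := by
  ext p
  simp only [mem_pairSupport, Fin.val_last, mem_singleton, Fin.ext_iff]
  omega

lemma two_le_card_pairSupport {t : Fin (k + 1)} (ht : (t : ℕ) < k) :
    2 ≤ #(pairSupport k t) := by
  calc 2 = #{(⟨2 * t, by omega⟩ : Fin (2 * k + 1)), ⟨2 * t + 1, by omega⟩} := by
        rw [card_pair (by simp [Fin.ext_iff])]
    _ ≤ #(pairSupport k t) := card_le_card fun p hp => by
        rcases mem_insert.mp hp with rfl | hp
        · exact mem_pairSupport.mpr (by simp)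
        · rw [mem_singleton.mp hp, mem_pairSupport]
          show (2 * (t : ℕ) + 1) / 2 = t
          omega

lemma three_le_hammingDist_pairSupport :
    Pairwise fun t s : Fin (k + 1) => 3 ≤ hammingDist (flipS (fun _ => false) (pairSupport k t))
      (flipS (fun _ => false) (pairSupport k s)) := by
  intro t s hts
  rw [hammingDist_flipS_of_disjoint _ (pairwise_disjoint_pairSupport hts)]
  have ht := (pairSupport_nonempty t).card_pos
  have hs := (pairSupport_nonempty s).card_pos
  rcases Nat.lt_or_ge (t : ℕ) k with htk | htk
  · linarith [two_le_card_pairSupport htk]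
  · have hsk : (s : ℕ) < k := by have := Fin.val_ne_of_ne hts; omega
    linarith [two_le_card_pairSupport hsk]

end PairSupport

theorem stmt0 (k : ℕ) :
    ∃ f : (Fin ((2*k+1)^2) → Bool) → Bool,
      sens f = 2*k+1 ∧ bs f = (2*k+1)*(k+1) := by
  let e : Fin (2 * k + 1) × Fin (2 * k + 1) ≃ Fin ((2 * k + 1) ^ 2) :=
    finProdFinEquiv.trans (finCongr (sq _).symm)
  refine ⟨patternOr e fun t => flipS (fun _ => false) (pairSupport k t),
    le_antisymm ?_ ?_, le_antisymm ?_ ?_⟩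
  · simpa using sens_patternOr_le (e := e) three_le_hammingDist_pairSupport
  · exact (le_sensAt_patternOr pairSupport_nonempty pairSupport_last).trans
      (Finset.le_sup (mem_univ _))
  · simpa using bs_patternOr_le (e := e) (pat := fun t => flipS (fun _ => false) (pairSupport k t))
  · calc (2 * k + 1) * (k + 1) = (2 * k + 1) * Fintype.card (Fin (k + 1)) := by simp
      _ ≤ _ := card_mul_le_bsAt_patternOr pairwise_disjoint_pairSupport pairSupport_nonempty
      _ ≤ _ := Finset.le_sup (mem_univ _)
end

section
/- Let k ≥ 0 and n = (2k+1)^2. Partition the n variables into 2k+1 sections of 2k+1 variables each. Call a section x_1,…,x_{2k+1} 'good' if either x_{2i-1}=x_{2i}=1 for some 1 ≤ i ≤ k and all other bits of the section are 0, or x_{2k+1}=1 and all other bits are 0. Define f(w)=1 iff some section of w is good. Then for every input w, s(f,w) ≤ 2k+1. -/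
def secIdx (k : ℕ) (s p : Fin (2*k+1)) : Fin ((2*k+1)^2) :=
  ⟨s.val * (2*k+1) + p.val, by have := s.isLt; have := p.isLt; nlinarith⟩

def sectionOf (k : ℕ) (w : Fin ((2*k+1)^2) → Bool) (s : Fin (2*k+1)) : Fin (2*k+1) → Bool :=
  fun p => w (secIdx k s p)

def goodSection (k : ℕ) (x : Fin (2*k+1) → Bool) : Prop :=
  (∃ i < k, ∀ j : Fin (2*k+1), x j = decide (j.val = 2*i ∨ j.val = 2*i+1)) ∨
  (∀ j : Fin (2*k+1), x j = decide (j.val = 2*k))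

instance (k : ℕ) (x : Fin (2*k+1) → Bool) : Decidable (goodSection k x) := by
  unfold goodSection; infer_instance

def goodF (k : ℕ) : (Fin ((2*k+1)^2) → Bool) → Bool :=
  fun w => decide (∃ s : Fin (2*k+1), goodSection k (sectionOf k w s))

open Function

section Hamming

variable {ι : Type*} [Fintype ι] [DecidableEq ι] {β : Type*} [DecidableEq β]

theorem hammingDist_update_self_le (x : ι → β) (p : ι) (a : β) :
    hammingDist (update x p a) x ≤ 1 := by
  refine (Finset.card_le_card fun j hj => ?_).trans (Finset.card_singleton p).le
  by_contra hjp
  simp_all [update_of_ne (Finset.notMem_singleton.mp hjp)]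

theorem hammingDist_update_update_le (x : ι → β) (p q : ι) (a b : β) :
    hammingDist (update x p a) (update x q b) ≤ 2 := by
  calc hammingDist (update x p a) (update x q b)
      ≤ hammingDist (update x p a) x + hammingDist x (update x q b) := hammingDist_triangle _ _ _
    _ ≤ 1 + 1 := by
      rw [hammingDist_comm x]
      exact add_le_add (hammingDist_update_self_le x p a) (hammingDist_update_self_le x q b)

theorem three_le_hammingDist_of_ne {x y : ι → β} {a b c : ι}
    (hab : a ≠ b) (hac : a ≠ c) (hbc : b ≠ c) (ha : x a ≠ y a) (hb : x b ≠ y b) (hc : x c ≠ y c) :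
    3 ≤ hammingDist x y := by
  rw [← Finset.card_eq_three.mpr ⟨a, b, c, hab, hac, hbc, rfl⟩]
  refine Finset.card_le_card fun j hj => ?_
  simp only [Finset.mem_insert, Finset.mem_singleton] at hj
  rcases hj with rfl | rfl | rfl <;> simpa [hammingDist]

theorem eq_of_update_update_of_three_le_hammingDist {C : (ι → β) → Prop}
    (hC : ∀ x y, C x → C y → x ≠ y → 3 ≤ hammingDist x y) {x : ι → β} {p q : ι} {a b : β}
    (ha : a ≠ x p) (hp : C (update x p a)) (hq : C (update x q b)) : p = q := by
  by_contra hpq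
  have heq : update x p a = update x q b := by
    by_contra hne
    have := hC _ _ hp hq hne
    have := hammingDist_update_update_le x p q a b
    omega
  have := congrFun heq p
  rw [update_self, update_of_ne hpq] at this
  exact ha this

end Hamming

section Blocks

variable {ι κ : Type*} {n : ℕ}

def block (e : ι × κ ≃ Fin n) (w : Fin n → Bool) (s : ι) : κ → Bool := fun p => w (e (s, p))

def orOfBlocks [Fintype ι] (e : ι × κ ≃ Fin n) (C : (κ → Bool) → Prop) [DecidablePred C]
    (w : Fin n → Bool) : Bool :=
  decide (∃ s, C (block e w s))

variable {e : ι × κ ≃ Fin n}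

theorem block_flipS_of_ne {w : Fin n → Bool} {s t : ι} (p : κ) (hts : t ≠ s) :
    block e (flipS w {e (s, p)}) t = block e w t := by
  funext q
  have : e (t, q) ≠ e (s, p) := e.injective.ne fun h => hts (Prod.ext_iff.mp h).1
  simp [block, flipS, this]

theorem block_flipS_self [DecidableEq κ] (w : Fin n → Bool) (s : ι) (p : κ) :
    block e (flipS w {e (s, p)}) s = update (block e w s) p (!block e w s p) := by
  funext q
  rcases eq_or_ne q p with rfl | hqp
  · simp [block, flipS]
  · have : e (s, q) ≠ e (s, p) := e.injective.ne fun h => hqp (Prod.ext_iff.mp h).2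
    simp [block, flipS, this, hqp]

theorem sensAt_eq_card_filter [Fintype ι] [Fintype κ] (e : ι × κ ≃ Fin n)
    (f : (Fin n → Bool) → Bool) (w : Fin n → Bool) :
    sensAt f w = (Finset.univ.filter fun sp : ι × κ => f (flipS w {e sp}) ≠ f w).card :=
  Finset.card_equiv e.symm fun i => by simp

variable [Fintype ι] {C : (κ → Bool) → Prop} [DecidablePred C]

theorem eq_of_orOfBlocks_flipS_ne {w : Fin n → Bool} {s t : ι} {p : κ} (hs : C (block e w s))
    (hsens : orOfBlocks e C (flipS w {e (t, p)}) ≠ orOfBlocks e C w) : t = s := by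
  by_contra hts
  refine hsens ?_
  simp only [orOfBlocks, decide_eq_decide]
  exact iff_of_true ⟨s, by rwa [block_flipS_of_ne p (Ne.symm hts)]⟩ ⟨s, hs⟩

theorem update_block_of_orOfBlocks_flipS [DecidableEq κ] {w : Fin n → Bool} {s : ι} {p : κ}
    (hw : orOfBlocks e C w = false) (hflip : orOfBlocks e C (flipS w {e (s, p)}) = true) :
    C (update (block e w s) p (!block e w s p)) := by
  obtain ⟨t, ht⟩ := of_decide_eq_true hflip
  rcases eq_or_ne t s with rfl | hts
  · rwa [block_flipS_self] at ht
  · rw [block_flipS_of_ne p hts] at ht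
    exact absurd ⟨t, ht⟩ (of_decide_eq_false hw)

theorem sensAt_orOfBlocks_le [Fintype κ] [DecidableEq κ]
    (hC : ∀ x y, C x → C y → x ≠ y → 3 ≤ hammingDist x y) (w : Fin n → Bool) :
    sensAt (orOfBlocks e C) w ≤ max (Fintype.card ι) (Fintype.card κ) := by
  rw [sensAt_eq_card_filter e]
  cases hw : orOfBlocks e C w
  · refine le_max_of_le_left (Finset.card_le_card_of_injOn Prod.fst (by simp) ?_)
    rintro ⟨s, p⟩ hp ⟨s', q⟩ hq (rfl : s = s')
    simp only [Finset.coe_filter, Finset.mem_univ, true_and, Set.mem_ofPred_eq, ne_eq,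
      Bool.not_eq_false] at hp hq
    rw [eq_of_update_update_of_three_le_hammingDist hC (Bool.not_ne_self _)
      (update_block_of_orOfBlocks_flipS hw hp) (update_block_of_orOfBlocks_flipS hw hq)]
  · obtain ⟨s, hs⟩ := of_decide_eq_true hw
    refine le_max_of_le_right (calc
      _ ≤ ({s} ×ˢ Finset.univ : Finset (ι × κ)).card := Finset.card_le_card fun ⟨t, p⟩ htp => ?_
      _ = Fintype.card κ := by simp)
    simp only [Finset.mem_filter, Finset.mem_univ, true_and] at htp
    rw [← hw] at htp
    simpa using (eq_of_orOfBlocks_flipS_ne hs htp).symm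

end Blocks

def secEquiv (k : ℕ) : Fin (2*k+1) × Fin (2*k+1) ≃ Fin ((2*k+1)^2) :=
  finProdFinEquiv.trans (finCongr (sq _).symm)

theorem secEquiv_apply (k : ℕ) (s p : Fin (2*k+1)) : secEquiv k (s, p) = secIdx k s p := by
  ext
  simp only [secEquiv, Equiv.trans_apply, finProdFinEquiv_apply_val, finCongr_apply, Fin.val_cast,
    secIdx]
  ring

theorem goodF_eq_orOfBlocks (k : ℕ) : goodF k = orOfBlocks (secEquiv k) (goodSection k) := by
  funext w
  simp only [goodF, orOfBlocks]
  congr! 4 with s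
  funext p
  simp [sectionOf, block, secEquiv_apply]

theorem three_le_hammingDist_of_pair {k i : ℕ} (hi : i < k) {x y : Fin (2*k+1) → Bool}
    (hx : ∀ j : Fin (2*k+1), x j = decide (j.val = 2*i ∨ j.val = 2*i+1)) (hy : goodSection k y)
    (hxy : x ≠ y) : 3 ≤ hammingDist x y := by
  rcases hy with ⟨i', hi', hy⟩ | hy
  · have hii' : i ≠ i' := by rintro rfl; exact hxy (funext fun j => (hx j).trans (hy j).symm)
    refine three_le_hammingDist_of_ne (a := ⟨2*i, by omega⟩) (b := ⟨2*i+1, by omega⟩)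
      (c := ⟨2*i', by omega⟩) ?_ ?_ ?_ ?_ ?_ ?_ <;> simp [hx, hy, Fin.ext_iff] <;> omega
  · refine three_le_hammingDist_of_ne (a := ⟨2*i, by omega⟩) (b := ⟨2*i+1, by omega⟩)
      (c := ⟨2*k, by omega⟩) ?_ ?_ ?_ ?_ ?_ ?_ <;> simp [hx, hy, Fin.ext_iff] <;> omega

theorem goodSection_three_le_hammingDist (k : ℕ) (x y : Fin (2*k+1) → Bool) (hx : goodSection k x)
    (hy : goodSection k y) (hxy : x ≠ y) : 3 ≤ hammingDist x y := by
  rcases hx with ⟨i, hi, hx⟩ | hx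
  · exact three_le_hammingDist_of_pair hi hx hy hxy
  rcases hy with ⟨i, hi, hy⟩ | hy
  · rw [hammingDist_comm]
    exact three_le_hammingDist_of_pair hi hy (Or.inr hx) hxy.symm
  · exact absurd (funext fun j => (hx j).trans (hy j).symm) hxy

theorem stmt1 (k : ℕ) (w : Fin ((2*k+1)^2) → Bool) :
    sensAt (goodF k) w ≤ 2*k+1 := by
  rw [goodF_eq_orOfBlocks]
  simpa using sensAt_orOfBlocks_le (e := secEquiv k) (goodSection_three_le_hammingDist k) w
end

section
/- For any Boolean function f on n variables, if the maximal block sensitivity is achieved with u blocks of size 1 and v blocks of size at least 2, then bs(f) = u + v ≤ (s(f) + n)/2. In particular, for any f on n variables, bs(f) ≤ (s(f) + n)/2. -/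
/-!
A family of sensitive blocks at `w` has `u` singleton blocks and `v` blocks of size at least
two. Each singleton block is a sensitive coordinate of `w`, so `u ≤ s(f)`; the blocks are
disjoint, so `u + 2 v ≤ n`. Adding the two bounds gives `2 (u + v) ≤ s(f) + n`.
-/

open Finset Function

section BlockFamily

variable {ι α : Type*} [Fintype ι] (B : ι → Finset α)

theorem sum_card_le_card_of_pairwise_disjoint [Fintype α] (hdisj : Pairwise (Disjoint on B)) :
    ∑ j, #(B j) ≤ Fintype.card α := by
  classical
  rw [← card_biUnion fun i _ j _ hij => hdisj hij]
  exact card_le_univ _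

theorem card_eq_card_filter_card_eq_one_add_card_filter_two_le (hne : ∀ j, (B j).Nonempty) :
    Fintype.card ι = #{j | #(B j) = 1} + #{j | 2 ≤ #(B j)} := by
  have hlarge : univ.filter (fun j => 2 ≤ #(B j)) = univ.filter (fun j => ¬ #(B j) = 1) := by
    ext j
    have := (hne j).card_pos
    simp only [mem_filter, mem_univ, true_and]
    omega
  rw [hlarge, card_filter_add_card_filter_not, card_univ]

theorem card_filter_card_eq_one_add_two_mul_le_sum_card :
    #{j | #(B j) = 1} + 2 * #{j | 2 ≤ #(B j)} ≤ ∑ j, #(B j) := by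
  rw [← sum_filter_add_sum_filter_not univ (fun j => #(B j) = 1)]
  gcongr
  · rw [sum_congr rfl fun j hj => (mem_filter.mp hj).2, card_eq_sum_ones]
  · calc 2 * #{j | 2 ≤ #(B j)} = ∑ j ∈ {j | 2 ≤ #(B j)}, 2 := by
          rw [sum_const, smul_eq_mul, mul_comm]
      _ ≤ ∑ j ∈ {j | 2 ≤ #(B j)}, #(B j) := sum_le_sum fun j hj => (mem_filter.mp hj).2
      _ ≤ ∑ j ∈ {j | ¬ #(B j) = 1}, #(B j) := by
        refine sum_le_sum_of_subset fun j hj => ?_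
        simp only [mem_filter, mem_univ, true_and] at hj ⊢
        omega

theorem card_le_card_of_pairwise_disjoint_nonempty [Fintype α] (hne : ∀ j, (B j).Nonempty)
    (hdisj : Pairwise (Disjoint on B)) : Fintype.card ι ≤ Fintype.card α := by
  have hcard := card_eq_card_filter_card_eq_one_add_card_filter_two_le B hne
  have hsum := card_filter_card_eq_one_add_two_mul_le_sum_card B
  have hle := sum_card_le_card_of_pairwise_disjoint B hdisj
  omega

end BlockFamily

section BlockSensitivity

variable {n : ℕ} (f : (Fin n → Bool) → Bool)

theorem card_filter_card_eq_one_le_sensAt {ι : Type*} [Fintype ι] (w : Fin n → Bool)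
    (B : ι → Finset (Fin n)) (hdisj : Pairwise (Disjoint on B))
    (hsens : ∀ j, f (flipS w (B j)) ≠ f w) :
    #{j | #(B j) = 1} ≤ sensAt f w := by
  set U : Finset ι := {j | #(B j) = 1}
  have hunion : U.biUnion B ⊆ univ.filter (fun i => f (flipS w {i}) ≠ f w) := by
    intro i hi
    obtain ⟨j, hj, hij⟩ := mem_biUnion.mp hi
    obtain ⟨a, ha⟩ := card_eq_one.mp (mem_filter.mp hj).2
    rw [ha, mem_singleton] at hij
    simpa [hij, ← ha] using hsens j
  calc #U = ∑ j ∈ U, #(B j) := by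
        rw [sum_congr rfl fun j hj => (mem_filter.mp hj).2, card_eq_sum_ones]
    _ = #(U.biUnion B) := (card_biUnion fun i _ j _ hij => hdisj hij).symm
    _ ≤ sensAt f w := card_le_card hunion

theorem two_mul_card_le_sens_add {ι : Type*} [Fintype ι] (w : Fin n → Bool)
    (B : ι → Finset (Fin n)) (hne : ∀ j, (B j).Nonempty) (hdisj : Pairwise (Disjoint on B))
    (hsens : ∀ j, f (flipS w (B j)) ≠ f w) :
    2 * Fintype.card ι ≤ sens f + n := by
  have hcard := card_eq_card_filter_card_eq_one_add_card_filter_two_le B hne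
  have hsingle := card_filter_card_eq_one_le_sensAt f w B hdisj hsens
  have hsum := card_filter_card_eq_one_add_two_mul_le_sum_card B
  have hle := sum_card_le_card_of_pairwise_disjoint B hdisj
  have hsensAt : sensAt f w ≤ sens f := le_sup (mem_univ w)
  rw [Fintype.card_fin] at hle
  omega

theorem exists_blocks_card_eq_bsAt (w : Fin n → Bool) : ∃ B : Fin (bsAt f w) → Finset (Fin n),
    (∀ j, (B j).Nonempty) ∧ (∀ j₁ j₂, j₁ ≠ j₂ → Disjoint (B j₁) (B j₂)) ∧
    ∀ j, f (flipS w (B j)) ≠ f w := by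
  refine Nat.sSup_mem (s := {k | ∃ B : Fin k → Finset (Fin n), (∀ j, (B j).Nonempty) ∧
    (∀ j₁ j₂, j₁ ≠ j₂ → Disjoint (B j₁) (B j₂)) ∧ (∀ j, f (flipS w (B j)) ≠ f w)}) ?_ ?_
  · exact ⟨0, finZeroElim, fun j => j.elim0, fun j => j.elim0, fun j => j.elim0⟩
  · refine ⟨n, fun k ⟨B, hne, hdisj, _⟩ => ?_⟩
    simpa using card_le_card_of_pairwise_disjoint_nonempty B hne hdisj

theorem two_mul_bs_le_sens_add : 2 * bs f ≤ sens f + n := by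
  obtain ⟨w, -, hw⟩ := exists_mem_eq_sup univ univ_nonempty (bsAt f)
  obtain ⟨B, hne, hdisj, hsens⟩ := exists_blocks_card_eq_bsAt f w
  simpa [bs, hw] using two_mul_card_le_sens_add f w B hne hdisj hsens

end BlockSensitivity

theorem stmt3 (n : ℕ) (f : (Fin n → Bool) → Bool) :
    (∀ (w : Fin n → Bool) (m : ℕ) (B : Fin m → Finset (Fin n)),
      (∀ j, (B j).Nonempty) →
      (∀ j₁ j₂, j₁ ≠ j₂ → Disjoint (B j₁) (B j₂)) →
      (∀ j, f (flipS w (B j)) ≠ f w) →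
      bs f = m →
      bs f = (Finset.univ.filter (fun j => (B j).card = 1)).card
              + (Finset.univ.filter (fun j => 2 ≤ (B j).card)).card ∧
      bs f ≤ (sens f + n) / 2) ∧
    bs f ≤ (sens f + n) / 2 := by
  have hbs : bs f ≤ (sens f + n) / 2 := by
    have := two_mul_bs_le_sens_add f
    omega
  refine ⟨fun w m B hne _ _ hm => ⟨?_, hbs⟩, hbs⟩
  simpa [hm] using card_eq_card_filter_card_eq_one_add_card_filter_two_le B hne
end

section
/- Let k ≥ 0 and let f be the 'good sections' function on n = (2k+1)^2 variables. For any input w with f(w) = 1, s(f,w) ≤ 2k+1: if two or more sections of w are good then s(f,w) = 0, and if exactly one section is good then only bits in that section can be sensitive. -/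
/-! Flipping bit `i` only changes section `i / (2k+1)`. So when `w` has a good section `s₀`,
flipping a bit outside `s₀` keeps `s₀` good and `f = 1`: every sensitive bit lies in every good
section. Hence there are none if two sections are good, and in any case they all lie in one
section of `2k+1` bits. -/

lemma card_filter_div_eq_le (n m s : ℕ) (hm : 0 < m) :
    (Finset.univ.filter fun i : Fin n => i.val / m = s).card ≤ m := by
  calc _ ≤ (Finset.Ico (s * m) (s * m + m)).card := by
        refine Finset.card_le_card_of_injOn Fin.val (fun i hi => ?_) Fin.val_injective.injOn
        have hi : i.val / m = s := (Finset.mem_filter.mp hi).2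
        subst hi
        simp only [Finset.coe_Ico, Set.mem_Ico]
        exact ⟨Nat.div_mul_le_self _ _, Nat.lt_div_mul_add hm⟩
    _ = m := by simp

lemma secIdx_div (k : ℕ) (s p : Fin (2*k+1)) : (secIdx k s p).val / (2*k+1) = s.val := by
  simp only [secIdx]
  rw [mul_comm, Nat.mul_add_div (Nat.succ_pos _), Nat.div_eq_of_lt p.isLt, Nat.add_zero]

lemma sectionOf_flipS_of_div_ne (k : ℕ) (w : Fin ((2*k+1)^2) → Bool) {i : Fin ((2*k+1)^2)}
    {s : Fin (2*k+1)} (h : i.val / (2*k+1) ≠ s.val) :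
    sectionOf k (flipS w {i}) s = sectionOf k w s := by
  funext p
  have hne : secIdx k s p ≠ i := fun he => h (he ▸ secIdx_div k s p)
  simp [sectionOf, flipS, hne]

lemma div_eq_of_goodF_flipS_ne {k : ℕ} {w : Fin ((2*k+1)^2) → Bool} (hw : goodF k w = true)
    {s : Fin (2*k+1)} (hs : goodSection k (sectionOf k w s))
    {i : Fin ((2*k+1)^2)} (hi : goodF k (flipS w {i}) ≠ goodF k w) :
    i.val / (2*k+1) = s.val := by
  by_contra h
  apply hi
  rw [hw, goodF, decide_eq_true_eq]
  exact ⟨s, by rwa [sectionOf_flipS_of_div_ne k w h]⟩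

theorem stmt9 (k : ℕ) (w : Fin ((2*k+1)^2) → Bool) (hw : goodF k w = true) :
    sensAt (goodF k) w ≤ 2*k+1 ∧
    (∀ s₁ s₂ : Fin (2*k+1), s₁ ≠ s₂ →
      goodSection k (sectionOf k w s₁) → goodSection k (sectionOf k w s₂) →
      sensAt (goodF k) w = 0) ∧
    (∀ s₀ : Fin (2*k+1), goodSection k (sectionOf k w s₀) →
      (∀ s, goodSection k (sectionOf k w s) → s = s₀) →
      ∀ i : Fin ((2*k+1)^2), goodF k (flipS w {i}) ≠ goodF k w →
        i.val / (2*k+1) = s₀.val) := by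
  obtain ⟨s₀, hs₀⟩ : ∃ s, goodSection k (sectionOf k w s) := by
    simpa [goodF] using hw
  refine ⟨?_, fun s₁ s₂ hne h₁ h₂ => ?_, fun s h _ i hi => div_eq_of_goodF_flipS_ne hw h hi⟩
  · refine (Finset.card_le_card fun i hi => ?_).trans
      (card_filter_div_eq_le _ (2*k+1) s₀.val (Nat.succ_pos _))
    rw [Finset.mem_filter] at hi ⊢
    exact ⟨hi.1, div_eq_of_goodF_flipS_ne hw hs₀ hi.2⟩
  · rw [sensAt, Finset.card_eq_zero, Finset.filter_eq_empty_iff]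
    intro i _ hi
    exact hne (Fin.ext ((div_eq_of_goodF_flipS_ne hw h₁ hi).symm.trans
      (div_eq_of_goodF_flipS_ne hw h₂ hi)))
end

section
/- For n = 4 there exists a Boolean function f on 4 variables with s(f) = 2 and bs(f) = 3. -/
/-! The witness is the indicator of the monotone words `w₀ ≤ w₁ ≤ w₂ ≤ w₃` or `w₀ ≥ w₁ ≥ w₂ ≥ w₃`.
These eight words form a cycle of length 8 in the 4-cube, so every word has exactly two neighbours
of the other value and `s(f) = 2`; at `0000` the blocks `{1}`, `{2}`, `{0, 3}` are sensitive, so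
`bs(f) ≥ 3`. Conversely, a block of size one at `w` is a sensitive coordinate, so `k` disjoint
sensitive blocks use at least `2k - s(f)` coordinates, whence `2 bs(f) ≤ n + s(f) = 6`. -/

open Finset

section BlockSensitivity

variable {n : ℕ} {f : (Fin n → Bool) → Bool} {w : Fin n → Bool}

theorem two_le_card_add_card_inter_sensitive {B : Finset (Fin n)} (hne : B.Nonempty)
    (hsens : f (flipS w B) ≠ f w) :
    2 ≤ #B + #(B ∩ univ.filter fun i => f (flipS w {i}) ≠ f w) := by
  obtain hsingle | htwo : #B = 1 ∨ 2 ≤ #B := by have := hne.card_pos; omega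
  · obtain ⟨i, rfl⟩ := card_eq_one.mp hsingle
    have hi : i ∈ univ.filter fun i => f (flipS w {i}) ≠ f w := by simpa using hsens
    simp [singleton_inter_of_mem hi]
  · omega

theorem two_mul_le_add_sensAt {k : ℕ} {B : Fin k → Finset (Fin n)} (hne : ∀ j, (B j).Nonempty)
    (hdisj : ∀ j₁ j₂, j₁ ≠ j₂ → Disjoint (B j₁) (B j₂)) (hsens : ∀ j, f (flipS w (B j)) ≠ f w) :
    2 * k ≤ n + sensAt f w := by
  set S := univ.filter fun i => f (flipS w {i}) ≠ f w
  have hdisjS : ((univ : Finset (Fin k)) : Set (Fin k)).PairwiseDisjoint (fun j => B j ∩ S) :=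
    fun j₁ _ j₂ _ h => (hdisj j₁ j₂ h).mono inter_subset_left inter_subset_left
  calc 2 * k = ∑ _j : Fin k, 2 := by simp [mul_comm]
    _ ≤ ∑ j, (#(B j) + #(B j ∩ S)) :=
      sum_le_sum fun j _ => two_le_card_add_card_inter_sensitive (hne j) (hsens j)
    _ = #(univ.biUnion B) + #(univ.biUnion fun j => B j ∩ S) := by
      rw [sum_add_distrib, card_biUnion fun j₁ _ j₂ _ h => hdisj j₁ j₂ h, card_biUnion hdisjS]
    _ ≤ n + #S := by
      gcongr
      · exact (card_le_univ _).trans_eq (Fintype.card_fin n)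
      · exact biUnion_subset.mpr fun j _ => inter_subset_right

theorem two_mul_bsAt_le : 2 * bsAt f w ≤ n + sensAt f w := by
  have hbound : bsAt f w ≤ (n + sensAt f w) / 2 :=
    csSup_le' fun k ⟨_, hne, hdisj, hsens⟩ =>
      (Nat.le_div_iff_mul_le two_pos).mpr (by linarith [two_mul_le_add_sensAt hne hdisj hsens])
  omega

theorem le_bsAt {k : ℕ} (B : Fin k → Finset (Fin n)) (hne : ∀ j, (B j).Nonempty)
    (hdisj : ∀ j₁ j₂, j₁ ≠ j₂ → Disjoint (B j₁) (B j₂)) (hsens : ∀ j, f (flipS w (B j)) ≠ f w) :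
    k ≤ bsAt f w :=
  le_csSup ⟨n + sensAt f w, fun _ ⟨_, hne, hdisj, hsens⟩ => by
    linarith [two_mul_le_add_sensAt hne hdisj hsens]⟩ ⟨B, hne, hdisj, hsens⟩

theorem two_mul_bs_le : 2 * bs f ≤ n + sens f := by
  obtain ⟨w, -, hw⟩ := exists_mem_eq_sup univ univ_nonempty (bsAt f)
  rw [bs, hw]
  exact two_mul_bsAt_le.trans (by gcongr; exact le_sup (mem_univ w))

end BlockSensitivity

def isMonotoneWord (w : Fin 4 → Bool) : Bool :=
  decide (Monotone w ∨ Antitone w)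

theorem sens_isMonotoneWord : sens isMonotoneWord = 2 := by decide

theorem three_le_bsAt_isMonotoneWord : 3 ≤ bsAt isMonotoneWord fun _ => false :=
  le_bsAt ![{1}, {2}, {0, 3}] (by decide) (by decide) (by decide)

theorem stmt19 : ∃ f : (Fin 4 → Bool) → Bool, sens f = 2 ∧ bs f = 3 := by
  refine ⟨isMonotoneWord, sens_isMonotoneWord, le_antisymm ?_ ?_⟩
  · have := two_mul_bs_le (f := isMonotoneWord)
    rw [sens_isMonotoneWord] at this
    omega
  · exact three_le_bsAt_isMonotoneWord.trans (le_sup (f := bsAt isMonotoneWord) (mem_univ _))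
end
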